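/- Let S be a string and let 1 ≤ x ≤ y < |S|. Suppose S[x..y] is ρ-periodic and S[x..y+1] is not ρ-periodic. Then for all indices x', y' with 1 ≤ x' ≤ x and y+1 ≤ y' ≤ |S|, the substring S[x'..y'] satisfies 2·per(S[x'..y']) > y − x + 2. -/
import Mathlib


variable {α : Type*}

/-- `sub S i j` is the substring `S[i..j]` (1-indexed, inclusive endpoints). -/
def sub (S : List α) (i j : ℕ) : List α := (S.take j).drop (i - 1)

/-- `ρ` is a period of `T`: `1 ≤ ρ` and `T[i] = T[i+ρ]` for all valid `i`. -/
def IsPeriod (T : List α) (ρ : ℕ) : Prop :=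
  1 ≤ ρ ∧ ∀ i : ℕ, i + ρ < T.length → T[i]? = T[i + ρ]?

/-- The minimal period of `T`. -/
noncomputable def per (T : List α) : ℕ := sInf {ρ : ℕ | IsPeriod T ρ}

lemma isPeriod_per (T : List α) : IsPeriod T (per T) := by
  have : IsPeriod T (T.length + 1) := ⟨by omega, fun i h => by omega⟩
  exact Nat.sInf_mem ⟨T.length + 1, Set.mem_setOf.mpr this⟩

lemma per_le {T : List α} {ρ : ℕ} (h : IsPeriod T ρ) : per T ≤ ρ := Nat.sInf_le (Set.mem_setOf.mpr h)

lemma sub_length (S : List α) (a b : ℕ) (hb : b ≤ S.length) :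
    (sub S a b).length = b - (a - 1) := by
  simp [sub]; omega

lemma sub_getElem? (S : List α) (a b i : ℕ) (h : a - 1 + i < b) :
    (sub S a b)[i]? = S[a - 1 + i]? := by
  rw [sub, List.getElem?_drop, List.getElem?_take_of_lt h]

/-- Period of a substring, phrased on indices of `S`. -/
lemma isPeriod_sub_iff (S : List α) (a b ρ : ℕ) (hρ : 1 ≤ ρ) (hb : b ≤ S.length) :
    IsPeriod (sub S a b) ρ ↔ ∀ k, a - 1 ≤ k → k + ρ < b → S[k]? = S[k + ρ]? := by
  constructor
  · rintro ⟨-, h⟩ k hk hkb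
    have h1 : k - (a - 1) + ρ < (sub S a b).length := by
      rw [sub_length S a b hb]; omega
    have := h (k - (a - 1)) h1
    rwa [sub_getElem? S a b _ (by omega), sub_getElem? S a b _ (by omega),
      show a - 1 + (k - (a - 1)) = k by omega,
      show a - 1 + (k - (a - 1) + ρ) = k + ρ by omega] at this
  · intro H
    refine ⟨hρ, fun i hi => ?_⟩
    rw [sub_length S a b hb] at hi
    rw [sub_getElem? S a b _ (by omega), sub_getElem? S a b _ (by omega)]
    have := H (a - 1 + i) (by omega) (by omega)
    rwa [show a - 1 + i + ρ = a - 1 + (i + ρ) by omega] at this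

/-- If `S[x..y]` is `ρ`-periodic and `S[x..y+1]` is not `ρ`-periodic, then for
all `x' ≤ x` and `y+1 ≤ y' ≤ |S|`, one has `2·per(S[x'..y']) > y − x + 2`. -/
theorem stmt12 (S : List α) (x y ρ : ℕ)
    (hx : 1 ≤ x) (hxy : x ≤ y) (hy : y < S.length)
    (hper : per (sub S x y) = ρ) (hlen : 2 * ρ ≤ y - x + 1)
    (hnot : ¬ (per (sub S x (y + 1)) = ρ ∧ 2 * ρ ≤ y - x + 2))
    (x' y' : ℕ) (hx'1 : 1 ≤ x') (hx'x : x' ≤ x)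
    (hy'l : y + 1 ≤ y') (hy'n : y' ≤ S.length) :
    y - x + 2 < 2 * per (sub S x' y') := by
  by_contra hcon
  push_neg at hcon
  set q := per (sub S x' y') with hq
  have hq1 : 1 ≤ q := (isPeriod_per (sub S x' y')).1
  have hρ1 : 1 ≤ ρ := hper ▸ (isPeriod_per (sub S x y)).1
  -- translate periods to statements over S
  have Pρ : ∀ k, x - 1 ≤ k → k + ρ < y → S[k]? = S[k + ρ]? :=
    (isPeriod_sub_iff S x y ρ hρ1 (by omega)).1 (hper ▸ isPeriod_per (sub S x y))
  have Pq : ∀ k, x' - 1 ≤ k → k + q < y' → S[k]? = S[k + q]? :=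
    (isPeriod_sub_iff S x' y' q hq1 hy'n).1 (isPeriod_per (sub S x' y'))
  -- key: ρ is a period of S[x..y+1]
  have key : IsPeriod (sub S x (y + 1)) ρ := by
    rw [isPeriod_sub_iff S x (y + 1) ρ hρ1 (by omega)]
    intro k hk hkb
    by_cases hc : k + ρ < y
    · exact Pρ k hk hc
    · -- k + ρ = y
      have hkρ : k + ρ = y := by omega
      have hsum : ρ + q ≤ y - x + 1 := by omega
      have e1 : S[y - ρ - q]? = S[y - ρ]? := by
        have := Pq (y - ρ - q) (by omega) (by omega)
        rwa [show y - ρ - q + q = y - ρ by omega] at this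
      have e2 : S[y - ρ - q]? = S[y - q]? := by
        have := Pρ (y - ρ - q) (by omega) (by omega)
        rwa [show y - ρ - q + ρ = y - q by omega] at this
      have e3 : S[y - q]? = S[y]? := by
        have := Pq (y - q) (by omega) (by omega)
        rwa [show y - q + q = y by omega] at this
      have : S[y - ρ]? = S[y]? := by rw [← e1, e2, e3]
      rwa [show k = y - ρ by omega, show y - ρ + ρ = y by omega]
  -- hence per (sub S x (y+1)) = ρ
  have h1 : per (sub S x (y + 1)) ≤ ρ := per_le key
  have h2 : ρ ≤ per (sub S x (y + 1)) := by
    set p := per (sub S x (y + 1)) with hp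
    have hpp := isPeriod_per (sub S x (y + 1))
    have hp1 : 1 ≤ p := hpp.1
    have Pp := (isPeriod_sub_iff S x (y + 1) p hp1 (by omega)).1 hpp
    have : IsPeriod (sub S x y) p := by
      rw [isPeriod_sub_iff S x y p hp1 (by omega)]
      exact fun k hk hkb => Pp k hk (by omega)
    calc ρ = per (sub S x y) := hper.symm
      _ ≤ p := per_le this
  exact hnot ⟨le_antisymm h1 h2, by omega⟩
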